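/- arXiv:1306.0409 — 2 statements merged into one kernel-verified Lean document; each statement's English description precedes it below -/
import Mathlib

section
/- Let γ ∈ [0, π/4], c = cos γ, and α, β ∈ [0, 1/2]. Define g(θ) = H_α((cos²θ, sin²θ)) + H_β((cos²(γ−θ), sin²(γ−θ))) for θ ∈ [0, γ]. Then the minimum of g over [0, γ] equals (1/(1−λ))·log( c^{2λ} + (1−c²)^λ ) with λ = max(α, β), and it is attained at θ = 0 when α < β, at θ = γ when α > β, and at both endpoints θ = 0 and θ = γ when α = β. -/
open Real

/-- Power with the convention `0 ^ λ = 0` for all `λ ≥ 0`. -/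
noncomputable def pw (p lam : ℝ) : ℝ := if p = 0 then 0 else p ^ lam

/-- Rényi entropy of the two-point probability vector `(p₁, p₂)`:
`H_λ(p) = (1/(1-λ)) log (p₁^λ + p₂^λ)` for `λ ≠ 1`, Shannon entropy for `λ = 1`. -/
noncomputable def Hren (lam p1 p2 : ℝ) : ℝ :=
  if lam = 1 then -(p1 * Real.log p1 + p2 * Real.log p2)
  else (1 - lam)⁻¹ * Real.log (pw p1 lam + pw p2 lam)

/-- `g(θ) = H_α((cos²θ, sin²θ)) + H_β((cos²(γ−θ), sin²(γ−θ)))`. -/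
noncomputable def gfun (α β γ θ : ℝ) : ℝ :=
  Hren α (Real.cos θ ^ 2) (Real.sin θ ^ 2) +
    Hren β (Real.cos (γ - θ) ^ 2) (Real.sin (γ - θ) ^ 2)
/-
The index λ = max(α, β) is at most 1/2. Rényi entropy is nonincreasing in its index, so
g(θ) ≥ H_λ(θ) + H_λ(γ − θ), writing H_λ(t) for the entropy of (cos²t, sin²t). For λ ≤ 1/2 the map
t ↦ H_λ(t) is subadditive on angles with sum at most π/2: with S(t) = cos^{2λ}t + sin^{2λ}t, the
addition formulas and the subadditivity of u ↦ u^{2λ} give S(x + y) ≤ S(x)·S(y). Hence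
g(θ) ≥ H_λ(γ), and this bound is attained at the endpoint where the index λ sits:
g(0) = H_β(γ) and g(γ) = H_α(γ).
-/

section pw

variable {a b p lam : ℝ}

lemma pw_zero (lam : ℝ) : pw 0 lam = 0 := if_pos rfl

lemma pw_of_ne_zero (h : p ≠ 0) : pw p lam = p ^ lam := if_neg h

lemma pw_one (lam : ℝ) : pw 1 lam = 1 := by
  rw [pw_of_ne_zero one_ne_zero, one_rpow]

lemma pw_nonneg (hp : 0 ≤ p) (lam : ℝ) : 0 ≤ pw p lam := by
  unfold pw; split
  · exact le_rfl
  · exact rpow_nonneg hp lam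

lemma le_pw_self (hp0 : 0 ≤ p) (hp1 : p ≤ 1) (hlam : lam ≤ 1) : p ≤ pw p lam := by
  rcases eq_or_ne p 0 with rfl | hp
  · rw [pw_zero]
  · rw [pw_of_ne_zero hp]
    exact self_le_rpow_of_le_one hp0 hp1 hlam

lemma pw_mul (ha : 0 ≤ a) (hb : 0 ≤ b) : pw (a * b) lam = pw a lam * pw b lam := by
  rcases eq_or_ne a 0 with rfl | ha'
  · simp [pw_zero]
  rcases eq_or_ne b 0 with rfl | hb'
  · simp [pw_zero]
  rw [pw_of_ne_zero ha', pw_of_ne_zero hb', pw_of_ne_zero (mul_ne_zero ha' hb'), mul_rpow ha hb]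

lemma pw_le_pw (ha : 0 ≤ a) (hab : a ≤ b) (hlam : 0 ≤ lam) : pw a lam ≤ pw b lam := by
  rcases eq_or_ne a 0 with rfl | ha'
  · rw [pw_zero]; exact pw_nonneg hab lam
  rw [pw_of_ne_zero ha', pw_of_ne_zero (ha.lt_of_ne' ha' |>.trans_le hab).ne']
  exact rpow_le_rpow ha hab hlam

lemma pw_add_le (ha : 0 ≤ a) (hb : 0 ≤ b) (hlam0 : 0 ≤ lam) (hlam1 : lam ≤ 1) :
    pw (a + b) lam ≤ pw a lam + pw b lam := by
  rcases eq_or_ne a 0 with rfl | ha'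
  · simp [pw_zero]
  rcases eq_or_ne b 0 with rfl | hb'
  · simp [pw_zero]
  rw [pw_of_ne_zero ha', pw_of_ne_zero hb', pw_of_ne_zero (by positivity)]
  exact rpow_add_le_add_rpow ha hb hlam0 hlam1

lemma pw_sq (ha : 0 ≤ a) (lam : ℝ) : pw (a ^ 2) lam = pw a (2 * lam) := by
  rcases eq_or_ne a 0 with rfl | ha'
  · simp [pw_zero]
  rw [pw_of_ne_zero (pow_ne_zero 2 ha'), pw_of_ne_zero ha', rpow_mul ha]
  norm_cast

lemma pw_sq_add_le (ha : 0 ≤ a) (hb : 0 ≤ b) (hlam0 : 0 ≤ lam) (hlam : lam ≤ 1 / 2) :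
    pw ((a + b) ^ 2) lam ≤ pw (a ^ 2) lam + pw (b ^ 2) lam := by
  rw [pw_sq (add_nonneg ha hb), pw_sq ha, pw_sq hb]
  exact pw_add_le ha hb (by linarith) (by linarith)

lemma one_le_pw_add_pw {p₁ p₂ : ℝ} (hp₁ : 0 ≤ p₁) (hp₂ : 0 ≤ p₂) (hp : p₁ + p₂ = 1)
    (hlam : lam ≤ 1) : 1 ≤ pw p₁ lam + pw p₂ lam := by
  have h₁ := le_pw_self hp₁ (by linarith) hlam
  have h₂ := le_pw_self hp₂ (by linarith) hlam
  linarith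

end pw

/-- Jensen's inequality for `x ↦ x ^ ((1 - a) / (1 - b))` at the points `p ^ (b - 1), q ^ (b - 1)`
with weights `p, q`. -/
lemma rpow_add_rpow_rpow_le {p q a b : ℝ} (hp : 0 < p) (hq : 0 < q) (hpq : p + q = 1)
    (hab : a ≤ b) (hb : b < 1) :
    (p ^ b + q ^ b) ^ ((1 - a) / (1 - b)) ≤ p ^ a + q ^ a := by
  have hb1 : 0 < 1 - b := by linarith
  have he : 1 ≤ (1 - a) / (1 - b) := by rw [le_div_iff₀ hb1]; linarith
  have hmul : ∀ {x : ℝ}, 0 < x → ∀ t : ℝ, x * x ^ (t - 1) = x ^ t := fun hx t => by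
    rw [rpow_sub_one hx.ne', mul_div_cancel₀ _ hx.ne']
  have hpow : ∀ {x : ℝ}, 0 < x → (x ^ (b - 1)) ^ ((1 - a) / (1 - b)) = x ^ (a - 1) := fun hx => by
    rw [← rpow_mul hx.le]
    congr 1
    field_simp
    ring
  have hjensen := (convexOn_rpow he).2 (Set.mem_Ici.2 (rpow_nonneg hp.le (b - 1)))
    (Set.mem_Ici.2 (rpow_nonneg hq.le (b - 1))) hp.le hq.le hpq
  simp only [smul_eq_mul, hpow hp, hpow hq, hmul hp, hmul hq] at hjensen
  exact hjensen

lemma Hren_of_ne_one {lam p₁ p₂ : ℝ} (h : lam ≠ 1) :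
    Hren lam p₁ p₂ = (1 - lam)⁻¹ * log (pw p₁ lam + pw p₂ lam) := if_neg h

lemma Hren_one_zero (lam : ℝ) : Hren lam 1 0 = 0 := by
  unfold Hren; split <;> simp [pw_zero, pw_one]

lemma Hren_zero_one (lam : ℝ) : Hren lam 0 1 = 0 := by
  unfold Hren; split <;> simp [pw_zero, pw_one]

theorem Hren_le_Hren_of_le {a b p₁ p₂ : ℝ} (hp₁ : 0 ≤ p₁) (hp₂ : 0 ≤ p₂) (hp : p₁ + p₂ = 1)
    (hab : a ≤ b) (hb : b < 1) : Hren b p₁ p₂ ≤ Hren a p₁ p₂ := by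
  rcases hp₁.eq_or_lt with rfl | hp₁
  · rw [show p₂ = 1 by linarith, Hren_zero_one, Hren_zero_one]
  rcases hp₂.eq_or_lt with rfl | hp₂
  · rw [show p₁ = 1 by linarith, Hren_one_zero, Hren_one_zero]
  rw [Hren_of_ne_one hb.ne, Hren_of_ne_one (hab.trans_lt hb).ne, pw_of_ne_zero hp₁.ne',
    pw_of_ne_zero hp₁.ne', pw_of_ne_zero hp₂.ne', pw_of_ne_zero hp₂.ne']
  have ha1 : 0 < 1 - a := by linarith
  have hb1 : 0 < 1 - b := by linarith
  have hlog : (1 - a) / (1 - b) * log (p₁ ^ b + p₂ ^ b) ≤ log (p₁ ^ a + p₂ ^ a) := by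
    rw [← log_rpow (by positivity)]
    exact log_le_log (by positivity) (rpow_add_rpow_rpow_le hp₁ hp₂ hp hab hb)
  calc (1 - b)⁻¹ * log (p₁ ^ b + p₂ ^ b)
      = (1 - a)⁻¹ * ((1 - a) / (1 - b) * log (p₁ ^ b + p₂ ^ b)) := by field_simp
    _ ≤ (1 - a)⁻¹ * log (p₁ ^ a + p₂ ^ a) := by gcongr

lemma pw_cos_sq_add_sin_sq_add_le {lam x y : ℝ} (hlam0 : 0 ≤ lam) (hlam : lam ≤ 1 / 2)
    (hx : 0 ≤ x) (hy : 0 ≤ y) (hxy : x + y ≤ π / 2) :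
    pw (cos (x + y) ^ 2) lam + pw (sin (x + y) ^ 2) lam ≤
      (pw (cos x ^ 2) lam + pw (sin x ^ 2) lam) * (pw (cos y ^ 2) lam + pw (sin y ^ 2) lam) := by
  have hA : 0 ≤ cos x := cos_nonneg_of_mem_Icc ⟨by linarith [pi_pos], by linarith⟩
  have hB : 0 ≤ sin x := sin_nonneg_of_nonneg_of_le_pi hx (by linarith [pi_pos])
  have hC : 0 ≤ cos y := cos_nonneg_of_mem_Icc ⟨by linarith [pi_pos], by linarith⟩
  have hD : 0 ≤ sin y := sin_nonneg_of_nonneg_of_le_pi hy (by linarith [pi_pos])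
  have hAC : 0 ≤ cos x * cos y - sin x * sin y := by
    rw [← cos_add]; exact cos_nonneg_of_mem_Icc ⟨by linarith [pi_pos], hxy⟩
  have hcos : pw (cos (x + y) ^ 2) lam ≤ pw (cos x ^ 2) lam * pw (cos y ^ 2) lam := by
    rw [← pw_mul (sq_nonneg _) (sq_nonneg _), ← mul_pow, cos_add]
    exact pw_le_pw (sq_nonneg _) (pow_le_pow_left₀ hAC (by nlinarith [mul_nonneg hB hD]) 2) hlam0
  have hsin : pw (sin (x + y) ^ 2) lam ≤
      pw (sin x ^ 2) lam * pw (cos y ^ 2) lam + pw (cos x ^ 2) lam * pw (sin y ^ 2) lam := by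
    rw [← pw_mul (sq_nonneg _) (sq_nonneg _), ← pw_mul (sq_nonneg _) (sq_nonneg _), ← mul_pow,
      ← mul_pow, sin_add]
    exact pw_sq_add_le (mul_nonneg hB hC) (mul_nonneg hA hD) hlam0 hlam
  have hBD : 0 ≤ pw (sin x ^ 2) lam * pw (sin y ^ 2) lam :=
    mul_nonneg (pw_nonneg (sq_nonneg _) _) (pw_nonneg (sq_nonneg _) _)
  linarith

theorem Hren_cos_sq_sin_sq_add_le {lam x y : ℝ} (hlam0 : 0 ≤ lam) (hlam : lam ≤ 1 / 2)
    (hx : 0 ≤ x) (hy : 0 ≤ y) (hxy : x + y ≤ π / 2) :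
    Hren lam (cos (x + y) ^ 2) (sin (x + y) ^ 2) ≤
      Hren lam (cos x ^ 2) (sin x ^ 2) + Hren lam (cos y ^ 2) (sin y ^ 2) := by
  have hS : ∀ t, 1 ≤ pw (cos t ^ 2) lam + pw (sin t ^ 2) lam := fun t =>
    one_le_pw_add_pw (sq_nonneg _) (sq_nonneg _) (cos_sq_add_sin_sq t) (by linarith)
  have hlam1 : lam ≠ 1 := by intro h; linarith
  rw [Hren_of_ne_one hlam1, Hren_of_ne_one hlam1, Hren_of_ne_one hlam1, ← mul_add,
    ← log_mul (by linarith [hS x]) (by linarith [hS y])]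
  gcongr
  · exact inv_nonneg.2 (by linarith)
  · linarith [hS (x + y)]
  · exact pw_cos_sq_add_sin_sq_add_le hlam0 hlam hx hy hxy

theorem Hren_le_gfun {α β γ θ lam : ℝ} (hα : α ≤ lam) (hβ : β ≤ lam) (hlam0 : 0 ≤ lam)
    (hlam : lam ≤ 1 / 2) (hθ : θ ∈ Set.Icc 0 γ) (hγ : γ ≤ π / 2) :
    Hren lam (cos γ ^ 2) (sin γ ^ 2) ≤ gfun α β γ θ := by
  have hmono : ∀ {a : ℝ}, a ≤ lam → ∀ t : ℝ,
      Hren lam (cos t ^ 2) (sin t ^ 2) ≤ Hren a (cos t ^ 2) (sin t ^ 2) := fun ha t =>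
    Hren_le_Hren_of_le (sq_nonneg _) (sq_nonneg _) (cos_sq_add_sin_sq t) ha (by linarith)
  calc Hren lam (cos γ ^ 2) (sin γ ^ 2)
      = Hren lam (cos (θ + (γ - θ)) ^ 2) (sin (θ + (γ - θ)) ^ 2) := by rw [add_sub_cancel]
    _ ≤ Hren lam (cos θ ^ 2) (sin θ ^ 2) + Hren lam (cos (γ - θ) ^ 2) (sin (γ - θ) ^ 2) :=
      Hren_cos_sq_sin_sq_add_le hlam0 hlam hθ.1 (by linarith [hθ.2]) (by linarith)
    _ ≤ gfun α β γ θ := add_le_add (hmono hα θ) (hmono hβ (γ - θ))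

lemma gfun_zero (α β γ : ℝ) : gfun α β γ 0 = Hren β (cos γ ^ 2) (sin γ ^ 2) := by
  simp [gfun, Hren_one_zero]

lemma gfun_self (α β γ : ℝ) : gfun α β γ γ = Hren α (cos γ ^ 2) (sin γ ^ 2) := by
  simp [gfun, Hren_one_zero]

/-- value and minimizers of `g` on `[0, γ]` when `α, β ∈ [0, 1/2]`. -/
theorem stmt_4 (γ : ℝ) (hγ : γ ∈ Set.Icc 0 (Real.pi / 4))
    (c : ℝ) (hc : c = Real.cos γ)
    (α β : ℝ) (hα : α ∈ Set.Icc (0 : ℝ) (1 / 2)) (hβ : β ∈ Set.Icc (0 : ℝ) (1 / 2))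
    (lam : ℝ) (hlam : lam = max α β) :
    IsLeast ((fun θ : ℝ => gfun α β γ θ) '' Set.Icc 0 γ)
      ((1 - lam)⁻¹ * Real.log (pw (c ^ 2) lam + pw (1 - c ^ 2) lam)) ∧
    (α < β → gfun α β γ 0 =
      (1 - lam)⁻¹ * Real.log (pw (c ^ 2) lam + pw (1 - c ^ 2) lam)) ∧
    (β < α → gfun α β γ γ =
      (1 - lam)⁻¹ * Real.log (pw (c ^ 2) lam + pw (1 - c ^ 2) lam)) ∧
    (α = β → gfun α β γ 0 =
        (1 - lam)⁻¹ * Real.log (pw (c ^ 2) lam + pw (1 - c ^ 2) lam) ∧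
      gfun α β γ γ =
        (1 - lam)⁻¹ * Real.log (pw (c ^ 2) lam + pw (1 - c ^ 2) lam)) := by
  obtain ⟨hγ0, hγ4⟩ := hγ
  have hlam0 : 0 ≤ lam := hlam ▸ hα.1.trans (le_max_left α β)
  have hlam2 : lam ≤ 1 / 2 := hlam ▸ max_le hα.2 hβ.2
  have hmin : (1 - lam)⁻¹ * log (pw (c ^ 2) lam + pw (1 - c ^ 2) lam) =
      Hren lam (cos γ ^ 2) (sin γ ^ 2) := by
    rw [Hren_of_ne_one (by linarith), hc, sin_sq]
  rw [hmin]
  have hat0 : α ≤ β → gfun α β γ 0 = Hren lam (cos γ ^ 2) (sin γ ^ 2) := fun h => by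
    rw [gfun_zero, hlam, max_eq_right h]
  have hatγ : β ≤ α → gfun α β γ γ = Hren lam (cos γ ^ 2) (sin γ ^ 2) := fun h => by
    rw [gfun_self, hlam, max_eq_left h]
  refine ⟨⟨?_, ?_⟩, fun h => hat0 h.le, fun h => hatγ h.le, fun h => ⟨hat0 h.le, hatγ h.ge⟩⟩
  · rcases le_total α β with h | h
    exacts [⟨0, ⟨le_rfl, hγ0⟩, hat0 h⟩, ⟨γ, ⟨hγ0, le_rfl⟩, hatγ h⟩]
  · rintro _ ⟨θ, hθ, rfl⟩
    exact Hren_le_gfun (hlam ▸ le_max_left α β) (hlam ▸ le_max_right α β) hlam0 hlam2 hθ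
      (by linarith [pi_pos])
end

section
/- Let T and T' be 2×2 unitary matrices with the same overlap, max_{k,l=1,2} |T_{lk}| = max_{k,l=1,2} |T'_{lk}|. Then for all α, β ≥ 0, the infimum over unit vectors ψ ∈ ℂ² of H_α(|ψ|²) + H_β(|Tψ|²) equals the infimum over unit vectors ψ of H_α(|ψ|²) + H_β(|T'ψ|²); i.e., the tight lower bound of the Rényi entropy sum depends on T only through its overlap. -/
open Real

/-! For unitary `T`, `|(Tψ)₁|² = ‖ψ‖² - |(Tψ)₀|²`, so the entropy sum at `ψ` only depends on
`|ψ₀|, |ψ₁|` and `(Tψ)₀ = T₀₀ ψ₀ + T₀₁ ψ₁`. Unitarity forces `|T₁₁| = |T₀₀|` and `|T₁₀| = |T₀₁|`, so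
the overlap is `max |T₀₀| |T₀₁|`; with `|T₀₀|² + |T₀₁|² = 1` it determines the first row up to
phases and the order of its entries. Phases are absorbed into `ψ`, and a swap of the entries into a
swap of `ψ₀, ψ₁`, under which the Rényi entropy is invariant. So `T` and `T'` attain the same
entropy sums. -/

open Matrix

lemma Hren_comm (lam p q : ℝ) : Hren lam p q = Hren lam q p := by
  unfold Hren
  split
  · ring
  · rw [add_comm (pw p lam)]

lemma exists_norm_eq_one_mul_eq {K : Type*} [NormedField K] {x y : K} (h : ‖x‖ = ‖y‖) :
    ∃ u : K, ‖u‖ = 1 ∧ x * u = y := by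
  by_cases hx : x = 0
  · refine ⟨1, norm_one, ?_⟩
    rw [hx, norm_zero, eq_comm, norm_eq_zero] at h
    rw [hx, h, zero_mul]
  · have hx' : ‖x‖ ≠ 0 := norm_ne_zero_iff.mpr hx
    exact ⟨y / x, by rw [norm_div, ← h, div_self hx'], mul_div_cancel₀ y hx⟩

lemma exists_norm_eq_and_linear_eq {K : Type*} [NormedField K] {a b a' b' : K}
    (h : (‖a'‖ = ‖a‖ ∧ ‖b'‖ = ‖b‖) ∨ (‖a'‖ = ‖b‖ ∧ ‖b'‖ = ‖a‖)) (ψ : Fin 2 → K) :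
    ∃ φ : Fin 2 → K, ((‖φ 0‖ = ‖ψ 0‖ ∧ ‖φ 1‖ = ‖ψ 1‖) ∨ (‖φ 0‖ = ‖ψ 1‖ ∧ ‖φ 1‖ = ‖ψ 0‖)) ∧
      a' * φ 0 + b' * φ 1 = a * ψ 0 + b * ψ 1 := by
  rcases h with ⟨ha, hb⟩ | ⟨ha, hb⟩
  · obtain ⟨u, hu, rfl⟩ := exists_norm_eq_one_mul_eq ha
    obtain ⟨v, hv, rfl⟩ := exists_norm_eq_one_mul_eq hb
    refine ⟨![u * ψ 0, v * ψ 1], .inl ?_, ?_⟩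
    · simp [hu, hv]
    · simp only [cons_val_zero, cons_val_one]
      ring
  · obtain ⟨u, hu, rfl⟩ := exists_norm_eq_one_mul_eq ha
    obtain ⟨v, hv, rfl⟩ := exists_norm_eq_one_mul_eq hb
    refine ⟨![u * ψ 1, v * ψ 0], .inr ?_, ?_⟩
    · simp [hu, hv]
    · simp only [cons_val_zero, cons_val_one]
      ring

section UnitaryGroup

variable {𝕜 n : Type*} [RCLike 𝕜] [Fintype n] [DecidableEq n] {U : Matrix n n 𝕜}

lemma sum_norm_sq_mulVec_of_mem_unitaryGroup (hU : U ∈ unitaryGroup n 𝕜) (v : n → 𝕜) :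
    ∑ i, ‖(U *ᵥ v) i‖ ^ 2 = ∑ i, ‖v i‖ ^ 2 := by
  have sum_eq_dotProduct (w : n → 𝕜) : ((∑ i, ‖w i‖ ^ 2 : ℝ) : 𝕜) = star w ⬝ᵥ w := by
    simp [dotProduct, RCLike.conj_mul]
  have hUU : Uᴴ * U = 1 := mem_unitaryGroup_iff'.mp hU
  have : star (U *ᵥ v) ⬝ᵥ (U *ᵥ v) = star v ⬝ᵥ v := by
    rw [star_mulVec, dotProduct_mulVec, vecMul_vecMul, hUU, vecMul_one]
  exact_mod_cast (sum_eq_dotProduct _).trans (this.trans (sum_eq_dotProduct v).symm)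

lemma sum_norm_sq_col_of_mem_unitaryGroup (hU : U ∈ unitaryGroup n 𝕜) (j : n) :
    ∑ i, ‖U i j‖ ^ 2 = 1 := by
  simpa [mulVec_single_one, Pi.single_apply, apply_ite] using
    sum_norm_sq_mulVec_of_mem_unitaryGroup hU (Pi.single j 1)

lemma sum_norm_sq_row_of_mem_unitaryGroup (hU : U ∈ unitaryGroup n 𝕜) (i : n) :
    ∑ j, ‖U i j‖ ^ 2 = 1 :=
  sum_norm_sq_col_of_mem_unitaryGroup (transpose_mem_unitaryGroup_iff.mpr hU) i

end UnitaryGroup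

lemma eq_and_eq_or_eq_and_eq_of_max_eq {x y x' y' : ℝ} (hx : 0 ≤ x) (hy : 0 ≤ y) (hx' : 0 ≤ x')
    (hy' : 0 ≤ y') (hsq : x' ^ 2 + y' ^ 2 = x ^ 2 + y ^ 2) (hmax : max x' y' = max x y) :
    (x' = x ∧ y' = y) ∨ (x' = y ∧ y' = x) := by
  rcases le_total x y with h | h <;> rcases le_total x' y' with h' | h' <;>
    simp only [max_eq_left, max_eq_right, h, h'] at hmax <;> subst hmax
  · exact .inl ⟨(sq_eq_sq₀ hx' hx).mp (by linarith), rfl⟩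
  · exact .inr ⟨rfl, (sq_eq_sq₀ hy' hx).mp (by linarith)⟩
  · exact .inr ⟨(sq_eq_sq₀ hx' hy).mp (by linarith), rfl⟩
  · exact .inl ⟨rfl, (sq_eq_sq₀ hy' hy).mp (by linarith)⟩

section FinTwo

variable {𝕜 : Type*} [RCLike 𝕜] {U : Matrix (Fin 2) (Fin 2) 𝕜}

lemma norm_sq_mulVec_one_of_mem_unitaryGroup (hU : U ∈ unitaryGroup (Fin 2) 𝕜) (v : Fin 2 → 𝕜) :
    ‖(U *ᵥ v) 1‖ ^ 2 = ‖v 0‖ ^ 2 + ‖v 1‖ ^ 2 - ‖(U *ᵥ v) 0‖ ^ 2 := by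
  have := sum_norm_sq_mulVec_of_mem_unitaryGroup hU v
  simp only [Fin.sum_univ_two] at this
  linarith

lemma norm_sq_add_norm_sq_row_zero (hU : U ∈ unitaryGroup (Fin 2) 𝕜) :
    ‖U 0 0‖ ^ 2 + ‖U 0 1‖ ^ 2 = 1 := by
  simpa [Fin.sum_univ_two] using sum_norm_sq_row_of_mem_unitaryGroup hU 0

lemma norm_one_one_eq_norm_zero_zero (hU : U ∈ unitaryGroup (Fin 2) 𝕜) : ‖U 1 1‖ = ‖U 0 0‖ := by
  have hcol := sum_norm_sq_col_of_mem_unitaryGroup hU 1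
  have hrow := norm_sq_add_norm_sq_row_zero hU
  simp only [Fin.sum_univ_two] at hcol
  exact (sq_eq_sq₀ (norm_nonneg _) (norm_nonneg _)).mp (by linarith)

lemma norm_one_zero_eq_norm_zero_one (hU : U ∈ unitaryGroup (Fin 2) 𝕜) : ‖U 1 0‖ = ‖U 0 1‖ := by
  have hcol := sum_norm_sq_col_of_mem_unitaryGroup hU 0
  have hrow := norm_sq_add_norm_sq_row_zero hU
  simp only [Fin.sum_univ_two] at hcol
  exact (sq_eq_sq₀ (norm_nonneg _) (norm_nonneg _)).mp (by linarith)

lemma isGreatest_norm_entries_of_mem_unitaryGroup (hU : U ∈ unitaryGroup (Fin 2) 𝕜) :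
    IsGreatest {x : ℝ | ∃ k l : Fin 2, x = ‖U l k‖} (max ‖U 0 0‖ ‖U 0 1‖) := by
  refine ⟨?_, ?_⟩
  · rcases max_choice ‖U 0 0‖ ‖U 0 1‖ with h | h
    · exact ⟨0, 0, h⟩
    · exact ⟨1, 0, h⟩
  · rintro x ⟨k, l, rfl⟩
    have h11 := norm_one_one_eq_norm_zero_zero hU
    have h10 := norm_one_zero_eq_norm_zero_one hU
    fin_cases k <;> fin_cases l <;> simp [h11, h10]

lemma row_zero_norms_eq_of_isGreatest {T T' : Matrix (Fin 2) (Fin 2) 𝕜}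
    (hT : T ∈ unitaryGroup (Fin 2) 𝕜) (hT' : T' ∈ unitaryGroup (Fin 2) 𝕜) {c : ℝ}
    (hc : IsGreatest {x : ℝ | ∃ k l : Fin 2, x = ‖T l k‖} c)
    (hc' : IsGreatest {x : ℝ | ∃ k l : Fin 2, x = ‖T' l k‖} c) :
    (‖T' 0 0‖ = ‖T 0 0‖ ∧ ‖T' 0 1‖ = ‖T 0 1‖) ∨ (‖T' 0 0‖ = ‖T 0 1‖ ∧ ‖T' 0 1‖ = ‖T 0 0‖) :=
  eq_and_eq_or_eq_and_eq_of_max_eq (norm_nonneg _) (norm_nonneg _) (norm_nonneg _)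
    (norm_nonneg _)
    ((norm_sq_add_norm_sq_row_zero hT').trans (norm_sq_add_norm_sq_row_zero hT).symm)
    ((isGreatest_norm_entries_of_mem_unitaryGroup hT').unique hc' |>.trans
      (hc.unique (isGreatest_norm_entries_of_mem_unitaryGroup hT)))

end FinTwo

def renyiSumValues (α β : ℝ) (T : Matrix (Fin 2) (Fin 2) ℂ) : Set ℝ :=
  {x : ℝ | ∃ ψ : Fin 2 → ℂ,
    ‖ψ 0‖ ^ 2 + ‖ψ 1‖ ^ 2 = 1 ∧
    x = Hren α (‖ψ 0‖ ^ 2) (‖ψ 1‖ ^ 2) + Hren β (‖T.mulVec ψ 0‖ ^ 2) (‖T.mulVec ψ 1‖ ^ 2)}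

lemma renyiSumValues_subset {T T' : Matrix (Fin 2) (Fin 2) ℂ}
    (hT : T ∈ unitaryGroup (Fin 2) ℂ) (hT' : T' ∈ unitaryGroup (Fin 2) ℂ)
    (hrow : (‖T' 0 0‖ = ‖T 0 0‖ ∧ ‖T' 0 1‖ = ‖T 0 1‖) ∨
      (‖T' 0 0‖ = ‖T 0 1‖ ∧ ‖T' 0 1‖ = ‖T 0 0‖)) (α β : ℝ) :
    renyiSumValues α β T ⊆ renyiSumValues α β T' := by
  rintro x ⟨ψ, hψ, rfl⟩
  obtain ⟨φ, hφ, hlin⟩ := exists_norm_eq_and_linear_eq hrow ψ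
  have h0 : (T' *ᵥ φ) 0 = (T *ᵥ ψ) 0 := by
    simp only [mulVec_fin_two, cons_val_zero, hlin]
  have hnorm : ‖φ 0‖ ^ 2 + ‖φ 1‖ ^ 2 = ‖ψ 0‖ ^ 2 + ‖ψ 1‖ ^ 2 := by
    rcases hφ with ⟨e0, e1⟩ | ⟨e0, e1⟩ <;> rw [e0, e1]
    exact add_comm _ _
  have h1 : ‖(T' *ᵥ φ) 1‖ ^ 2 = ‖(T *ᵥ ψ) 1‖ ^ 2 := by
    rw [norm_sq_mulVec_one_of_mem_unitaryGroup hT', norm_sq_mulVec_one_of_mem_unitaryGroup hT,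
      hnorm, h0]
  refine ⟨φ, hnorm.trans hψ, ?_⟩
  rw [h0, h1]
  rcases hφ with ⟨e0, e1⟩ | ⟨e0, e1⟩
  · rw [e0, e1]
  · rw [e0, e1, Hren_comm α]

theorem stmt_8_general (T T' : Matrix (Fin 2) (Fin 2) ℂ)
    (hT : T ∈ Matrix.unitaryGroup (Fin 2) ℂ)
    (hT' : T' ∈ Matrix.unitaryGroup (Fin 2) ℂ)
    (c : ℝ)
    (hc : IsGreatest {x : ℝ | ∃ k l : Fin 2, x = ‖T l k‖} c)
    (hc' : IsGreatest {x : ℝ | ∃ k l : Fin 2, x = ‖T' l k‖} c)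
    (α β : ℝ) :
    sInf {x : ℝ | ∃ ψ : Fin 2 → ℂ,
        ‖ψ 0‖ ^ 2 + ‖ψ 1‖ ^ 2 = 1 ∧
        x = Hren α (‖ψ 0‖ ^ 2) (‖ψ 1‖ ^ 2) +
          Hren β (‖T.mulVec ψ 0‖ ^ 2) (‖T.mulVec ψ 1‖ ^ 2)} =
    sInf {x : ℝ | ∃ ψ : Fin 2 → ℂ,
        ‖ψ 0‖ ^ 2 + ‖ψ 1‖ ^ 2 = 1 ∧
        x = Hren α (‖ψ 0‖ ^ 2) (‖ψ 1‖ ^ 2) +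
          Hren β (‖T'.mulVec ψ 0‖ ^ 2) (‖T'.mulVec ψ 1‖ ^ 2)} := by
  show sInf (renyiSumValues α β T) = sInf (renyiSumValues α β T')
  rw [(renyiSumValues_subset hT hT' (row_zero_norms_eq_of_isGreatest hT hT' hc hc') α β).antisymm
    (renyiSumValues_subset hT' hT (row_zero_norms_eq_of_isGreatest hT' hT hc' hc) α β)]

/-- the tight bound depends on `T` only through its overlap. -/
theorem stmt_8 (T T' : Matrix (Fin 2) (Fin 2) ℂ)
    (hT : T ∈ Matrix.unitaryGroup (Fin 2) ℂ)
    (hT' : T' ∈ Matrix.unitaryGroup (Fin 2) ℂ)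
    (c : ℝ)
    (hc : IsGreatest {x : ℝ | ∃ k l : Fin 2, x = ‖T l k‖} c)
    (hc' : IsGreatest {x : ℝ | ∃ k l : Fin 2, x = ‖T' l k‖} c)
    (α β : ℝ) (hα : 0 ≤ α) (hβ : 0 ≤ β) :
    sInf {x : ℝ | ∃ ψ : Fin 2 → ℂ,
        ‖ψ 0‖ ^ 2 + ‖ψ 1‖ ^ 2 = 1 ∧
        x = Hren α (‖ψ 0‖ ^ 2) (‖ψ 1‖ ^ 2) +
          Hren β (‖T.mulVec ψ 0‖ ^ 2) (‖T.mulVec ψ 1‖ ^ 2)} =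
    sInf {x : ℝ | ∃ ψ : Fin 2 → ℂ,
        ‖ψ 0‖ ^ 2 + ‖ψ 1‖ ^ 2 = 1 ∧
        x = Hren α (‖ψ 0‖ ^ 2) (‖ψ 1‖ ^ 2) +
          Hren β (‖T'.mulVec ψ 0‖ ^ 2) (‖T'.mulVec ψ 1‖ ^ 2)} :=
  stmt_8_general T T' hT hT' c hc hc' α β
end
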